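/- arXiv:2204.12239 — 3 statements merged into one kernel-verified Lean document; each statement's English description precedes it below -/
import Mathlib

section
/- Let d ≥ 3, r_h > 0, f₀ᵈ > 0, and let χ : [r_h, ∞) → ℝ be continuous, nonincreasing, nonnegative, with lim_{r→∞} χ(r) = 0. Suppose m : [r_h, ∞) → ℝ is continuous with 0 ≤ m(x) ≤ f₀ᵈ/2, and that 1 = 2 ∫_{r_h}^∞ (d·m(x) − X(x) − x^{d−2}) e^{-χ(x)/2} x^{-(d+1)} dx, where X(x) = (d−2) ∫_x^∞ (1 − e^{-χ(y)/2}) y^{d−3} dy. Then f₀ᵈ/r_hᵈ − 1/r_h² ≥ 1. -/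
/-!
Write `u = e^{-χ/2}` and `h x = (d f₀ᵈ/2 - x^{d-2}) / x^{d+1}`. Since `X ≥ 0` and `m ≤ f₀ᵈ/2`,
the normalisation gives `1 ≤ 2 ∫ u h`. The profile `h` changes sign once, from `+` to `-`, at some
`ξ ≥ r_h`, while `u` is nondecreasing with `0 < u ≤ 1`; hence `u h ≤ u(ξ) h` pointwise and
`1 ≤ 2 u(ξ) ∫ h = u(ξ) (f₀ᵈ/r_hᵈ - 1/r_h²) ≤ f₀ᵈ/r_hᵈ - 1/r_h²`.
-/

open MeasureTheory Set Real

section InversePowers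

variable {c : ℝ}

lemma integrableOn_Ioi_inv_pow {n : ℕ} (hn : 2 ≤ n) (hc : 0 < c) :
    IntegrableOn (fun x : ℝ => (x ^ n)⁻¹) (Ioi c) := by
  refine (integrableOn_Ioi_rpow_of_lt (a := -(n : ℝ)) (by norm_cast; omega) hc).congr_fun
    (fun x hx => ?_) measurableSet_Ioi
  dsimp only
  rw [rpow_neg (hc.trans hx).le, rpow_natCast]

lemma integral_Ioi_inv_pow {n : ℕ} (hn : 2 ≤ n) (hc : 0 < c) :
    ∫ x in Ioi c, (x ^ n)⁻¹ = (((n : ℝ) - 1) * c ^ (n - 1))⁻¹ := by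
  have hrpow : ∫ x in Ioi c, (x ^ n)⁻¹ = ∫ x in Ioi c, x ^ (-(n : ℝ)) :=
    setIntegral_congr_fun measurableSet_Ioi fun x hx => by
      rw [rpow_neg (hc.trans hx).le, rpow_natCast]
  rw [hrpow, integral_Ioi_rpow_of_lt (by norm_cast; omega) hc,
    show -(n : ℝ) + 1 = -((n - 1 : ℕ) : ℝ) by push_cast [Nat.cast_sub (by omega : 1 ≤ n)]; ring,
    rpow_neg hc.le, rpow_natCast, Nat.cast_sub (by omega : 1 ≤ n), Nat.cast_one,
    neg_div_neg_eq, div_eq_mul_inv, mul_inv, mul_comm]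

end InversePowers

section Profile

variable {d : ℕ} {r : ℝ}

lemma sub_pow_div_pow_eq (hd : 2 ≤ d) (c : ℝ) {x : ℝ} (hx : x ≠ 0) :
    (c - x ^ (d - 2)) / x ^ (d + 1) = c * (x ^ (d + 1))⁻¹ - (x ^ 3)⁻¹ := by
  rw [show x ^ (d + 1) = x ^ (d - 2) * x ^ 3 by rw [← pow_add]; congr 1; omega]
  field_simp

lemma integrableOn_Ioi_sub_pow_div_pow (hd : 2 ≤ d) (c : ℝ) (hr : 0 < r) :
    IntegrableOn (fun x : ℝ => (c - x ^ (d - 2)) / x ^ (d + 1)) (Ioi r) :=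
  IntegrableOn.congr_fun (((integrableOn_Ioi_inv_pow (n := d + 1) (by omega) hr).const_mul c).sub
    (integrableOn_Ioi_inv_pow (n := 3) (by norm_num) hr))
    (fun x hx => (sub_pow_div_pow_eq hd c (hr.trans hx).ne').symm) measurableSet_Ioi

lemma integral_Ioi_sub_pow_div_pow (hd : 2 ≤ d) (c : ℝ) (hr : 0 < r) :
    ∫ x in Ioi r, (c - x ^ (d - 2)) / x ^ (d + 1) = c / (d * r ^ d) - 1 / (2 * r ^ 2) := by
  rw [setIntegral_congr_fun measurableSet_Ioi
      fun x hx => sub_pow_div_pow_eq hd c (hr.trans hx).ne',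
    integral_sub ((integrableOn_Ioi_inv_pow (by omega) hr).const_mul c)
      (integrableOn_Ioi_inv_pow (by norm_num) hr), integral_const_mul,
    integral_Ioi_inv_pow (by omega) hr, integral_Ioi_inv_pow (by norm_num) hr]
  push_cast
  rw [add_sub_cancel_right]
  norm_num [div_eq_mul_inv]

lemma exists_sign_change_sub_pow_div_pow (hd : 3 ≤ d) {c : ℝ} (hc : 0 ≤ c) (hr : 0 ≤ r) :
    ∃ ξ, r ≤ ξ ∧ ∀ x, r < x →
      (x ≤ ξ → 0 ≤ (c - x ^ (d - 2)) / x ^ (d + 1)) ∧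
      (ξ ≤ x → (c - x ^ (d - 2)) / x ^ (d + 1) ≤ 0) := by
  have hk : (0 : ℝ) < (d - 2 : ℕ) := by norm_cast; omega
  refine ⟨max r (c ^ ((d - 2 : ℕ) : ℝ)⁻¹), le_max_left _ _,
    fun x hrx => ⟨fun hxξ => ?_, fun hξx => ?_⟩⟩
  · have hx := (le_max_iff.1 hxξ).resolve_left (not_le.2 hrx)
    rw [le_rpow_inv_iff_of_pos (hr.trans hrx.le) hc hk, rpow_natCast] at hx
    exact div_nonneg (sub_nonneg.2 hx) (pow_nonneg (hr.trans hrx.le) _)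
  · have hx := (max_le_iff.1 hξx).2
    rw [rpow_inv_le_iff_of_pos hc (hr.trans hrx.le) hk, rpow_natCast] at hx
    exact div_nonpos_of_nonpos_of_nonneg (sub_nonpos.2 hx) (pow_nonneg (hr.trans hrx.le) _)

end Profile

lemma mul_le_mul_of_monotoneOn_of_sign_change {α : Type*} [LinearOrder α]
    {s : Set α} {u : α → ℝ} (hu : MonotoneOn u s) {x ξ : α} (hx : x ∈ s) (hξ : ξ ∈ s) {g : ℝ}
    (hpos : x ≤ ξ → 0 ≤ g) (hneg : ξ ≤ x → g ≤ 0) : u x * g ≤ u ξ * g := by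
  rcases le_total x ξ with h | h
  · exact mul_le_mul_of_nonneg_right (hu hx hξ h) (hpos h)
  · exact mul_le_mul_of_nonpos_right (hu hξ hx h) (hneg h)

theorem setIntegral_mul_le_of_monotoneOn_of_sign_change {α : Type*} [LinearOrder α]
    [MeasurableSpace α] {μ : Measure α} {s t : Set α} {u h : α → ℝ} {ξ : α}
    (hs : MeasurableSet s) (hst : s ⊆ t) (hu : MonotoneOn u t) (hξ : ξ ∈ t)
    (hpos : ∀ x ∈ s, x ≤ ξ → 0 ≤ h x) (hneg : ∀ x ∈ s, ξ ≤ x → h x ≤ 0)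
    (huh : IntegrableOn (fun x => u x * h x) s μ) (hh : IntegrableOn h s μ) :
    ∫ x in s, u x * h x ∂μ ≤ u ξ * ∫ x in s, h x ∂μ := by
  rw [← integral_const_mul]
  exact setIntegral_mono_on huh (hh.const_mul _) hs fun x hx =>
    mul_le_mul_of_monotoneOn_of_sign_change hu (hst hx) hξ (hpos x hx) (hneg x hx)

lemma IntegrableOn.mul_of_monotoneOn {μ : Measure ℝ} {s : Set ℝ} {u h : ℝ → ℝ} {C : ℝ}
    (hh : IntegrableOn h s μ) (hs : MeasurableSet s) (hu : MonotoneOn u s)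
    (hC : ∀ x ∈ s, ‖u x‖ ≤ C) : IntegrableOn (fun x => u x * h x) s μ :=
  hh.bdd_mul (aemeasurable_restrict_of_monotoneOn hs hu).aestronglyMeasurable
    ((ae_restrict_iff' hs).2 (ae_of_all _ hC))

/-- No integrability of `f` is assumed: the Bochner integral of a non-integrable function is `0`. -/
lemma setIntegral_mono_on_of_ne_zero {α : Type*} [MeasurableSpace α] {μ : Measure α}
    {s : Set α} {f g : α → ℝ} (hs : MeasurableSet s) (hf : ∫ x in s, f x ∂μ ≠ 0)
    (hg : IntegrableOn g s μ) (hfg : ∀ x ∈ s, f x ≤ g x) :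
    ∫ x in s, f x ∂μ ≤ ∫ x in s, g x ∂μ :=
  setIntegral_mono_on (by by_contra h; exact hf (integral_undef h)) hg hs hfg

theorem stmt_3_general (d : ℕ) (hd : 3 ≤ d) (r_h f0d : ℝ) (hrh : 0 < r_h)
    (χ m : ℝ → ℝ)
    (hχ_anti : AntitoneOn χ (Set.Ici r_h))
    (hχ_nonneg : ∀ x, r_h ≤ x → 0 ≤ χ x)
    (hm_bd : ∀ x, r_h ≤ x → 0 ≤ m x ∧ m x ≤ f0d / 2)
    (X : ℝ → ℝ)
    (hX : ∀ x, X x = ((d : ℝ) - 2) * ∫ y in Set.Ioi x, (1 - Real.exp (-χ y / 2)) * y ^ (d - 3))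
    (hnorm : 1 = 2 * ∫ x in Set.Ioi r_h,
        (d * m x - X x - x ^ (d - 2)) * Real.exp (-χ x / 2) / x ^ (d + 1)) :
    f0d / r_h ^ d - 1 / r_h ^ 2 ≥ 1 := by
  set u : ℝ → ℝ := fun x => exp (-χ x / 2)
  set c : ℝ := d * (f0d / 2) with hc
  set h : ℝ → ℝ := fun x => (c - x ^ (d - 2)) / x ^ (d + 1)
  have hd' : (3 : ℝ) ≤ d := by exact_mod_cast hd
  have hu_mono : MonotoneOn u (Ici r_h) := fun x hx y hy hxy =>
    exp_le_exp.2 (by linarith [hχ_anti hx hy hxy])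
  have hu_le_one : ∀ x, r_h ≤ x → u x ≤ 1 := fun x hx =>
    exp_le_one_iff.2 (by linarith [hχ_nonneg x hx])
  have hX_nonneg : ∀ x, r_h ≤ x → 0 ≤ X x := fun x hx => by
    rw [hX x]
    refine mul_nonneg (by linarith) (setIntegral_nonneg measurableSet_Ioi fun y hy => ?_)
    have hy : r_h ≤ y := hx.trans (le_of_lt hy)
    exact mul_nonneg (by linarith [hu_le_one y hy]) (pow_nonneg (hrh.le.trans hy) _)
  have hF_le : ∀ x ∈ Ioi r_h,
      (d * m x - X x - x ^ (d - 2)) * u x / x ^ (d + 1) ≤ u x * h x := fun x hx => by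
    have hx0 : 0 < x := hrh.trans hx
    have hm : d * m x - X x ≤ c := by
      nlinarith [hX_nonneg x hx.le, (hm_bd x hx.le).2]
    calc (d * m x - X x - x ^ (d - 2)) * u x / x ^ (d + 1)
        ≤ (c - x ^ (d - 2)) * u x / x ^ (d + 1) := by gcongr
      _ = u x * h x := by ring
  have hh_int : IntegrableOn h (Ioi r_h) := integrableOn_Ioi_sub_pow_div_pow (by omega) c hrh
  have huh_int : IntegrableOn (fun x => u x * h x) (Ioi r_h) :=
    IntegrableOn.mul_of_monotoneOn hh_int measurableSet_Ioi (hu_mono.mono Ioi_subset_Ici_self)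
      fun x hx => by rw [norm_of_nonneg (exp_pos _).le]; exact hu_le_one x hx.le
  obtain ⟨ξ, hξ, hsign⟩ := exists_sign_change_sub_pow_div_pow hd
    (show 0 ≤ c by nlinarith [hm_bd r_h le_rfl]) hrh.le
  have key : 1 ≤ u ξ * (f0d / r_h ^ d - 1 / r_h ^ 2) := calc
    (1 : ℝ) ≤ 2 * ∫ x in Ioi r_h, u x * h x := by
      rw [hnorm]
      gcongr 2 * ?_
      exact setIntegral_mono_on_of_ne_zero measurableSet_Ioi (by linarith) huh_int hF_le
    _ ≤ 2 * (u ξ * ∫ x in Ioi r_h, h x) := by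
      gcongr 2 * ?_
      exact setIntegral_mul_le_of_monotoneOn_of_sign_change measurableSet_Ioi
        Ioi_subset_Ici_self hu_mono hξ (fun x hx => (hsign x hx).1) (fun x hx => (hsign x hx).2)
        huh_int hh_int
    _ = u ξ * (f0d / r_h ^ d - 1 / r_h ^ 2) := by
      rw [integral_Ioi_sub_pow_div_pow (by omega) c hrh, hc]
      field_simp
  nlinarith [hu_le_one ξ hξ, exp_pos (-χ ξ / 2)]

theorem stmt_3 (d : ℕ) (hd : 3 ≤ d) (r_h f0d : ℝ) (hrh : 0 < r_h) (hf0 : 0 < f0d)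
    (χ m : ℝ → ℝ)
    (hχ_cont : ContinuousOn χ (Set.Ici r_h)) (hχ_anti : AntitoneOn χ (Set.Ici r_h))
    (hχ_nonneg : ∀ x, r_h ≤ x → 0 ≤ χ x)
    (hχ_lim : Filter.Tendsto χ Filter.atTop (nhds 0))
    (hm_cont : ContinuousOn m (Set.Ici r_h))
    (hm_bd : ∀ x, r_h ≤ x → 0 ≤ m x ∧ m x ≤ f0d / 2)
    (X : ℝ → ℝ)
    (hX : ∀ x, X x = ((d : ℝ) - 2) * ∫ y in Set.Ioi x, (1 - Real.exp (-χ y / 2)) * y ^ (d - 3))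
    (hnorm : 1 = 2 * ∫ x in Set.Ioi r_h,
        (d * m x - X x - x ^ (d - 2)) * Real.exp (-χ x / 2) / x ^ (d + 1)) :
    f0d / r_h ^ d - 1 / r_h ^ 2 ≥ 1 :=
  stmt_3_general d hd r_h f0d hrh χ m hχ_anti hχ_nonneg hm_bd X hX hnorm
end

section
/- Let d ≥ 3, r_h > 0, f₀ᵈ > 0, Q_m² ≥ 0, and let χ : [r_h, ∞) → ℝ be continuous, nonincreasing, and nonnegative. Define W(r) = d·f₀ᵈ/2 − 2Q_m²/((d−2)r^{d−2}) (the planar case k = 0). Suppose W(r_h) ≥ 0 and 1 ≤ 2 ∫_{r_h}^∞ W(x) e^{-χ(x)/2} x^{-(d+1)} dx. Then 1 ≤ f₀ᵈ/r_hᵈ − 2Q_m²/((d−1)(d−2) r_h^{2d−2}). -/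
/-!
Since `Q_m² ≥ 0`, `W(r) = d f₀ᵈ/2 − B / r^(d-2)` has `B ≥ 0` and is nondecreasing, so `W(r_h) ≥ 0` makes `W`
nonnegative on `[r_h, ∞)`. There `0 < e^{-χ/2} ≤ 1`, so the normalization integral is bounded by
`2 ∫_{r_h}^∞ W(x) x^{-(d+1)} dx`, which is an explicit sum of two power integrals and equals
`f₀ᵈ/r_hᵈ − 2Q_m²/((d−1)(d−2) r_h^{2d−2})`.
-/

open MeasureTheory Set

lemma inv_pow_eq_rpow_neg {x : ℝ} (hx : 0 ≤ x) (n : ℕ) : (x ^ n)⁻¹ = x ^ (-(n : ℝ)) := by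
  rw [Real.rpow_neg hx, Real.rpow_natCast]

lemma integrableOn_Ioi_inv_pow_succ {n : ℕ} (hn : 0 < n) {c : ℝ} (hc : 0 < c) :
    IntegrableOn (fun x : ℝ => (x ^ (n + 1))⁻¹) (Ioi c) := by
  have hlt : -((n + 1 : ℕ) : ℝ) < -1 := by push_cast; linarith [(Nat.cast_pos.mpr hn : (0 : ℝ) < n)]
  refine (integrableOn_Ioi_rpow_of_lt hlt hc).congr_fun (fun x hx => ?_) measurableSet_Ioi
  exact (inv_pow_eq_rpow_neg (hc.trans hx).le _).symm

lemma integral_Ioi_inv_pow_succ {n : ℕ} (hn : 0 < n) {c : ℝ} (hc : 0 < c) :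
    ∫ x in Ioi c, (x ^ (n + 1))⁻¹ = ((n : ℝ) * c ^ n)⁻¹ := by
  have hlt : -((n + 1 : ℕ) : ℝ) < -1 := by push_cast; linarith [(Nat.cast_pos.mpr hn : (0 : ℝ) < n)]
  rw [setIntegral_congr_fun measurableSet_Ioi
    (fun x hx => inv_pow_eq_rpow_neg (hc.trans (mem_Ioi.mp hx)).le (n + 1)),
    integral_Ioi_rpow_of_lt hlt hc, show -((n + 1 : ℕ) : ℝ) + 1 = -(n : ℝ) by push_cast; ring,
    ← inv_pow_eq_rpow_neg hc.le, mul_inv, neg_div, div_neg, neg_neg, div_eq_inv_mul]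

section PowerProfile

variable (A B : ℝ) (k : ℕ) {n : ℕ} {c : ℝ}

lemma monotoneOn_sub_div_pow (hB : 0 ≤ B) :
    MonotoneOn (fun r : ℝ => A - B / r ^ k) (Ioi 0) := fun x hx y _ hxy => by
  have := div_le_div_of_nonneg_left hB (pow_pos hx k) (pow_le_pow_left₀ (le_of_lt hx) hxy k)
  dsimp only
  linarith

lemma sub_div_pow_div_pow_succ {x : ℝ} (hx : 0 < x) :
    (A - B / x ^ k) / x ^ (n + 1) = A * (x ^ (n + 1))⁻¹ - B * (x ^ (n + k + 1))⁻¹ := by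
  rw [show n + k + 1 = k + (n + 1) by ring, pow_add]
  field_simp
  ring

lemma integrableOn_Ioi_sub_div_pow_div_pow_succ (hn : 0 < n) (hc : 0 < c) :
    IntegrableOn (fun x : ℝ => (A - B / x ^ k) / x ^ (n + 1)) (Ioi c) := by
  refine IntegrableOn.congr_fun (((integrableOn_Ioi_inv_pow_succ hn hc).const_mul A).sub
    ((integrableOn_Ioi_inv_pow_succ (Nat.add_pos_left hn k) hc).const_mul B))
    (fun x hx => ?_) measurableSet_Ioi
  exact (sub_div_pow_div_pow_succ A B k (hc.trans hx)).symm

lemma integral_Ioi_sub_div_pow_div_pow_succ (hn : 0 < n) (hc : 0 < c) :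
    ∫ x in Ioi c, (A - B / x ^ k) / x ^ (n + 1) =
      A / (n * c ^ n) - B / ((n + k : ℕ) * c ^ (n + k)) := by
  rw [setIntegral_congr_fun measurableSet_Ioi
    (fun x hx => sub_div_pow_div_pow_succ A B k (hc.trans (mem_Ioi.mp hx))),
    integral_sub ((integrableOn_Ioi_inv_pow_succ hn hc).const_mul A)
      ((integrableOn_Ioi_inv_pow_succ (Nat.add_pos_left hn k) hc).const_mul B),
    integral_const_mul, integral_const_mul, integral_Ioi_inv_pow_succ hn hc,
    integral_Ioi_inv_pow_succ (Nat.add_pos_left hn k) hc, div_eq_mul_inv, div_eq_mul_inv]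

end PowerProfile

lemma setIntegral_mul_le_of_le_one {X : Type*} [MeasurableSpace X] {μ : Measure X} {s : Set X}
    {f g : X → ℝ} (hf : ∀ x ∈ s, 0 ≤ f x) (hfi : IntegrableOn f s μ) (hg₀ : ∀ x ∈ s, 0 ≤ g x)
    (hg₁ : ∀ x ∈ s, g x ≤ 1) :
    ∫ x in s, f x * g x ∂μ ≤ ∫ x in s, f x ∂μ :=
  setIntegral_mono_of_nonneg (fun x hx => mul_nonneg (hf x hx) (hg₀ x hx))
    (fun x hx => mul_le_of_le_one_right (hf x hx) (hg₁ x hx)) hfi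

theorem stmt_6_general (d : ℕ) (hd : 3 ≤ d) (r_h f0d Qm2 : ℝ) (hrh : 0 < r_h)
    (hQ : 0 ≤ Qm2)
    (χ : ℝ → ℝ)
    (hχn : ∀ x, r_h ≤ x → 0 ≤ χ x)
    (W : ℝ → ℝ) (hW : ∀ r, W r = d * f0d / 2 - 2 * Qm2 / (((d : ℝ) - 2) * r ^ (d - 2)))
    (hWh : 0 ≤ W r_h)
    (hnorm : 1 ≤ 2 * ∫ x in Set.Ioi r_h, W x * Real.exp (-χ x / 2) / x ^ (d + 1)) :
    1 ≤ f0d / r_h ^ d - 2 * Qm2 / (((d : ℝ) - 1) * ((d : ℝ) - 2) * r_h ^ (2 * d - 2)) := by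
  have hd' : (3 : ℝ) ≤ d := by exact_mod_cast hd
  have hW' : W = fun r => d * f0d / 2 - 2 * Qm2 / ((d : ℝ) - 2) / r ^ (d - 2) := by
    ext r; rw [hW, div_div]
  have hW_nonneg : ∀ x ∈ Ioi r_h, 0 ≤ W x := fun x hx =>
    hWh.trans <| hW' ▸ monotoneOn_sub_div_pow _ _ (d - 2) (div_nonneg (by linarith) (by linarith))
      hrh (hrh.trans hx) (le_of_lt hx)
  have hd0 : 0 < d := by omega
  have hint : IntegrableOn (fun x => W x / x ^ (d + 1)) (Ioi r_h) :=
    hW' ▸ integrableOn_Ioi_sub_div_pow_div_pow_succ _ _ _ hd0 hrh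
  have hval := integral_Ioi_sub_div_pow_div_pow_succ (d * f0d / 2) (2 * Qm2 / ((d : ℝ) - 2))
    (d - 2) hd0 hrh
  rw [show d + (d - 2) = 2 * d - 2 by omega] at hval
  have hcast : ((2 * d - 2 : ℕ) : ℝ) = 2 * ((d : ℝ) - 1) := by
    rw [Nat.cast_sub (by omega)]; push_cast; ring
  calc 1 ≤ 2 * ∫ x in Ioi r_h, W x / x ^ (d + 1) * Real.exp (-χ x / 2) := by
        simpa only [mul_div_right_comm] using hnorm
    _ ≤ 2 * ∫ x in Ioi r_h, W x / x ^ (d + 1) := by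
        refine mul_le_mul_of_nonneg_left (setIntegral_mul_le_of_le_one
          (fun x hx => div_nonneg (hW_nonneg x hx) (pow_pos (hrh.trans hx) _).le) hint
          (fun x _ => (Real.exp_pos _).le)
          (fun x hx => Real.exp_le_one_iff.mpr ?_)) zero_le_two
        linarith [hχn x (le_of_lt hx)]
    _ = _ := by
        rw [hW', hval, hcast]
        have : (d : ℝ) - 2 ≠ 0 := by linarith
        have : (d : ℝ) - 1 ≠ 0 := by linarith
        field_simp

theorem stmt_6 (d : ℕ) (hd : 3 ≤ d) (r_h f0d Qm2 : ℝ) (hrh : 0 < r_h) (hf0 : 0 < f0d)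
    (hQ : 0 ≤ Qm2)
    (χ : ℝ → ℝ) (hχc : ContinuousOn χ (Set.Ici r_h)) (hχa : AntitoneOn χ (Set.Ici r_h))
    (hχn : ∀ x, r_h ≤ x → 0 ≤ χ x)
    (W : ℝ → ℝ) (hW : ∀ r, W r = d * f0d / 2 - 2 * Qm2 / (((d : ℝ) - 2) * r ^ (d - 2)))
    (hWh : 0 ≤ W r_h)
    (hnorm : 1 ≤ 2 * ∫ x in Set.Ioi r_h, W x * Real.exp (-χ x / 2) / x ^ (d + 1)) :
    1 ≤ f0d / r_h ^ d - 2 * Qm2 / (((d : ℝ) - 1) * ((d : ℝ) - 2) * r_h ^ (2 * d - 2)) :=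
  stmt_6_general d hd r_h f0d Qm2 hrh hQ χ hχn W hW hWh hnorm
end

section
/- Define χ : [1, ∞) → ℝ by e^{-χ(r)/2} = (4 + tanh(r − 5))/5, i.e. χ(r) = −2·ln((4 + tanh(r−5))/5). Then χ is strictly decreasing, χ(r) > 0 for all r ≥ 1, lim_{r→∞} χ(r) = 0, and the function X(r) = ∫_r^∞ (1 − e^{-χ(x)/2}) dx satisfies X(r) = (ln cosh(r−5) − r + ln 2)/5 + 1 and X(r) ≥ 0 for all r ≥ 1. -/
/-!
With `u r = (4 + tanh (r - 5)) / 5` we have `χ = -2 log u`, and `u` increases strictly from above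
`3/5` towards `1`, which gives monotonicity, positivity and the limit of `χ`. The integrand of `X`
is `(1 - tanh (x - 5)) / 5 > 0`; an antiderivative of `1 - tanh` is `x - log (cosh x)`, which tends
to `log 2` because `log (cosh x) = x - log 2 + log (1 + exp (-2x))`.
-/

open Real Filter Set MeasureTheory Topology

namespace Real

theorem tanh_strictMono : StrictMono tanh := fun a b hab => by
  by_contra! h
  have := artanh_le_artanh (neg_one_lt_tanh b) (tanh_lt_one a) h
  rw [artanh_tanh, artanh_tanh] at this
  linarith

theorem one_sub_tanh_eq (x : ℝ) : 1 - tanh x = 2 / (exp (2 * x) + 1) := by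
  rw [tanh_eq, exp_neg, show 2 * x = x + x by ring, exp_add]
  have := exp_pos x
  field_simp
  ring

theorem tendsto_tanh_atTop : Tendsto tanh atTop (𝓝 1) := by
  have h : Tendsto (fun x => 1 - tanh x) atTop (𝓝 0) := by
    simp only [one_sub_tanh_eq]
    refine tendsto_const_nhds.div_atTop (tendsto_atTop_add_const_right _ _ ?_)
    exact tendsto_exp_atTop.comp (tendsto_id.const_mul_atTop two_pos)
  simpa using (tendsto_const_nhds (x := (1 : ℝ))).sub h

theorem hasDerivAt_log_cosh (x : ℝ) : HasDerivAt (fun y => log (cosh y)) (tanh x) x := by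
  convert (hasDerivAt_cosh x).log (cosh_pos x).ne' using 1
  rw [tanh_eq_sinh_div_cosh]

theorem log_cosh_eq (x : ℝ) : log (cosh x) = x - log 2 + log (1 + exp (-(2 * x))) := by
  have hcosh : cosh x = exp x * (1 + exp (-(2 * x))) / 2 := by
    rw [cosh_eq, show -(2 * x) = -x + -x by ring, exp_add, exp_neg]
    field_simp
  rw [hcosh, log_div (by positivity) two_ne_zero, log_mul (exp_pos x).ne' (by positivity), log_exp]
  ring

theorem tendsto_sub_log_cosh_atTop : Tendsto (fun x => x - log (cosh x)) atTop (𝓝 (log 2)) := by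
  have hexp : Tendsto (fun x : ℝ => exp (-(2 * x))) atTop (𝓝 0) :=
    tendsto_exp_atBot.comp (tendsto_neg_atTop_atBot.comp (tendsto_id.const_mul_atTop two_pos))
  have hlog : Tendsto (fun x : ℝ => log (1 + exp (-(2 * x)))) atTop (𝓝 0) := by
    have h1 : Tendsto (fun x : ℝ => 1 + exp (-(2 * x))) atTop (𝓝 1) := by
      simpa using hexp.const_add 1
    simpa [Function.comp_def] using (continuousAt_log one_ne_zero).tendsto.comp h1
  convert (tendsto_const_nhds (x := log 2)).sub hlog using 1
  · funext x
    rw [log_cosh_eq]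
    ring
  · simp

theorem integral_Ioi_one_sub_tanh_sub (r c : ℝ) :
    ∫ x in Ioi r, (1 - tanh (x - c)) = log (cosh (r - c)) - (r - c) + log 2 := by
  have hderiv : ∀ x ∈ Ici r,
      HasDerivAt (fun y => (y - c) - log (cosh (y - c))) (1 - tanh (x - c)) x := fun x _ =>
    ((hasDerivAt_id' x).sub_const c).sub ((hasDerivAt_log_cosh (x - c)).comp_sub_const x c)
  have hlim : Tendsto (fun y => (y - c) - log (cosh (y - c))) atTop (𝓝 (log 2)) :=
    tendsto_sub_log_cosh_atTop.comp (tendsto_atTop_add_const_right _ _ tendsto_id)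
  rw [integral_Ioi_of_hasDerivAt_of_nonneg' hderiv (fun x _ => (sub_pos.2 (tanh_lt_one _)).le) hlim]
  ring

end Real

/-- The profile `e^{-χ/2}`. -/
noncomputable def tanhProfile (r : ℝ) : ℝ := (4 + tanh (r - 5)) / 5

theorem tanhProfile_pos (r : ℝ) : 0 < tanhProfile r := by
  have := neg_one_lt_tanh (r - 5)
  unfold tanhProfile
  linarith

theorem tanhProfile_lt_one (r : ℝ) : tanhProfile r < 1 := by
  have := tanh_lt_one (r - 5)
  unfold tanhProfile
  linarith

theorem tanhProfile_strictMono : StrictMono tanhProfile := fun a b hab => by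
  have := tanh_strictMono (sub_lt_sub_right hab 5)
  unfold tanhProfile
  linarith

theorem tendsto_tanhProfile_atTop : Tendsto tanhProfile atTop (𝓝 1) := by
  have hshift : Tendsto (fun r : ℝ => r - 5) atTop atTop :=
    tendsto_atTop_add_const_right _ (-5) tendsto_id
  have h := ((tendsto_tanh_atTop.comp hshift).const_add 4).div_const 5
  norm_num [Function.comp_def] at h
  exact h

theorem integral_Ioi_one_sub_tanhProfile (r : ℝ) :
    ∫ x in Ioi r, (1 - tanhProfile x) = (log (cosh (r - 5)) - r + log 2) / 5 + 1 := by
  have h : ∀ x, 1 - tanhProfile x = (1 - tanh (x - 5)) / 5 := fun x => by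
    unfold tanhProfile
    ring
  simp only [h, integral_div, integral_Ioi_one_sub_tanh_sub]
  ring

theorem stmt_12 (χ X : ℝ → ℝ)
    (hχ : ∀ r, χ r = -2 * Real.log ((4 + Real.tanh (r - 5)) / 5))
    (hX : ∀ r, X r = ∫ x in Set.Ioi r, (1 - Real.exp (-χ x / 2))) :
    StrictAntiOn χ (Set.Ici (1 : ℝ)) ∧
    (∀ r : ℝ, 1 ≤ r → 0 < χ r) ∧
    Filter.Tendsto χ Filter.atTop (nhds 0) ∧
    (∀ r : ℝ, 1 ≤ r →
      X r = (Real.log (Real.cosh (r - 5)) - r + Real.log 2) / 5 + 1) ∧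
    (∀ r : ℝ, 1 ≤ r → 0 ≤ X r) := by
  obtain rfl : χ = fun r => -2 * log (tanhProfile r) := funext hχ
  have hexp : ∀ x, exp (-(-2 * log (tanhProfile x)) / 2) = tanhProfile x := fun x => by
    rw [show -(-2 * log (tanhProfile x)) / 2 = log (tanhProfile x) by ring,
      exp_log (tanhProfile_pos x)]
  simp only [hexp] at hX
  refine ⟨fun a _ b _ hab => ?_, fun r _ => ?_, ?_, fun r _ => ?_, fun r _ => ?_⟩
  · have := log_lt_log (tanhProfile_pos a) (tanhProfile_strictMono hab)
    linarith
  · have := log_neg (tanhProfile_pos r) (tanhProfile_lt_one r)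
    linarith
  · have hlog := (continuousAt_log one_ne_zero).tendsto.comp tendsto_tanhProfile_atTop
    simpa using hlog.const_mul (-2)
  · rw [hX, integral_Ioi_one_sub_tanhProfile]
  · rw [hX]
    exact setIntegral_nonneg measurableSet_Ioi fun x _ => (sub_pos.2 (tanhProfile_lt_one x)).le
end
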